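/- For a single qubit, averaging over the six stabilizer-basis measurements (or equivalently, uniform random choice among measuring Pauli X, Y, or Z) the expectation of 3·U†|s⟩⟨s|U − I equals ρ; i.e., the single-qubit Clifford group suffices in place of the Haar measure for unbiased shadow estimation. -/
import Mathlib


open Matrix
open scoped ComplexOrder

noncomputable section

/-- The Pauli matrices X, Y, Z. -/
def PauliXYZ : Fin 3 → Matrix (Fin 2) (Fin 2) ℂ
  | 0 => !![0, 1; 1, 0]
  | 1 => !![0, -Complex.I; Complex.I, 0]
  | 2 => !![1, 0; 0, -1]

/-- Eigenprojector `(I ± W)/2` of the Pauli matrix `W` (sign `+` for `b = true`). -/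
def pauliProj (w : Fin 3) (b : Bool) : Matrix (Fin 2) (Fin 2) ℂ :=
  (2 : ℂ)⁻¹ • (1 + (if b then (1 : ℂ) else -1) • PauliXYZ w)

/-- Averaging over uniformly random Pauli-basis (X, Y or Z) measurements, the
Born-rule-weighted expectation of the shadow estimator `3 Π − I` equals `ρ`:
the single-qubit Clifford group suffices for unbiased shadow estimation. -/
theorem clifford_shadow_unbiased
    (ρ : Matrix (Fin 2) (Fin 2) ℂ) (hρ : ρ.PosSemidef) (hτ : ρ.trace = 1) :
    (3 : ℂ)⁻¹ • ∑ w : Fin 3, ∑ b : Bool,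
      (ρ * pauliProj w b).trace • ((3 : ℂ) • pauliProj w b - 1) = ρ := by
  obtain ⟨a, b, c, d, rfl⟩ : ∃ a b c d, ρ = !![a, b; c, d] :=
    ⟨ρ 0 0, ρ 0 1, ρ 1 0, ρ 1 1, by ext i j; fin_cases i <;> fin_cases j <;> rfl⟩
  have hτ' : a + d = 1 := by rw [Matrix.trace_fin_two_of] at hτ; exact hτ
  have hI : Complex.I * Complex.I = -1 := Complex.I_mul_I
  ext i j
  simp only [Fin.sum_univ_three, Fintype.sum_bool, pauliProj, PauliXYZ,
    Matrix.trace_fin_two, smul_sub, smul_smul]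
  fin_cases i <;> fin_cases j <;>
    simp [Matrix.mul_apply, Fin.sum_univ_two, Matrix.one_apply] <;>
    ring_nf <;>
    first
    | linear_combination ((c - b)/2) * hI
    | linear_combination ((b - c)/2) * hI
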